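/- Let (λ_N)_{N≥1} be a sequence in [0,1] with λ_N·√N → 0 as N → ∞. Then there exists N₀ such that for all N ≥ N₀: (i) S_k^{(N)}(−1,…,−1) > 0 for every k ≤ N; (ii) (1−λ_N)·S_{N−1}^{(N)}(−1,…,−1) − S_N^{(N)}(−1,…,−1,x) ≥ 0 for both x ∈ {−1,1}; and (iii) (1−λ_N)·S_{N−1}^{(N)}(−1,…,−1) − S_N^{(N)}(−1,…,−1,−1) > 0. (Hence the 1-step strategy that short-sells one unit of stock at time N−1 on the all-down path and liquidates at time N is a λ_N-arbitrage in the N-fractional binary market.) -/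

import Mathlib

open MeasureTheory

/-- The normalizing constant `c_H`. -/
noncomputable def cH (H : ℝ) : ℝ :=
  Real.sqrt (2 * H * Real.Gamma (3/2 - H) / (Real.Gamma (H + 1/2) * Real.Gamma (2 - 2*H)))

/-- The coefficient `j_n(i)` of the disturbed random walk. -/
noncomputable def jn (H σ : ℝ) (n i : ℕ) : ℝ :=
  σ * cH H * (H - 1/2) *
    ∫ x in ((i : ℝ) - 1)..(i : ℝ),
      x ^ ((1:ℝ)/2 - H) *
        ∫ v in (0:ℝ)..1, (v + n - 1) ^ (H - 1/2) * (v + n - 1 - x) ^ (H - 3/2)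

/-- The coefficient `g_n` of the disturbed random walk. -/
noncomputable def gn (H σ : ℝ) (n : ℕ) : ℝ :=
  σ * cH H * (H - 1/2) *
    ∫ x in ((n : ℝ) - 1)..(n : ℝ),
      x ^ ((1:ℝ)/2 - H) * ((n : ℝ) - x) ^ (H - 1/2) *
        ∫ y in (0:ℝ)..1, (y * ((n : ℝ) - x) + x) ^ (H - 1/2) * y ^ (H - 3/2)

/-- The stock price in the `N`-fractional binary market after `n` steps along the
sign path `x` (indexed from 1):
`S_n^{(N)}(x) = s₀ ∏_{k=1}^n (1 + (∑_{i=1}^{k-1} j_k(i) x_i + g_k x_k)/N^H)`. -/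
noncomputable def Sp (H σ : ℝ) (N : ℕ) (s₀ : ℝ) (n : ℕ) (x : ℕ → ℝ) : ℝ :=
  s₀ * ∏ k ∈ Finset.Icc 1 n,
    (1 + ((∑ i ∈ Finset.Icc 1 (k - 1), jn H σ k i * x i) + gn H σ k * x k) / (N : ℝ) ^ H)

/-!
Along the all-down path the `k`-th factor of the price is `1 - (A_k + g_k) / N^H`, where
`A_k = ∑_{i<k} j_k(i)`. For `x ∈ [i-1, i]` the inner integral of `j_n(i)` lies between
`x^(H-1/2)` and `n^(H-1/2)` times
`∫_0^1 (v + n-1-x)^(H-3/2) dv = ((n-x)^(H-1/2) - (n-1-x)^(H-1/2)) / (H-1/2)`, which is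
increasing in `x`; evaluated at the endpoints `x = i-1, i`, the sum over `i` telescopes:
`σ c_H (k^(H-1/2) - 1) ≤ A_k ≤ σ c_H (3/2-H)⁻¹ k^(2H-1)`, while `0 ≤ g_k ≤ σ c_H (3/2-H)⁻¹`.
As `2H - 1 < H`, all factors up to time `N` are positive for large `N`. As
`λ_N N^H = (λ_N √N) N^(H-1/2) = o(N^(H-1/2))`, the last return `(g_N x - A_N) / N^H` on the
down path eventually falls below `-λ_N`, so the short sale at `N - 1` gains even after costs.
-/

open Finset Filter

lemma integral_add_rpow {p : ℝ} (hp : -1 < p) (a : ℝ) :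
    ∫ v in (0:ℝ)..1, (v + a) ^ p = ((1 + a) ^ (p + 1) - a ^ (p + 1)) / (p + 1) := by
  rw [intervalIntegral.integral_comp_add_right (fun v => v ^ p), zero_add,
    integral_rpow (Or.inl hp)]

lemma intervalIntegrable_add_rpow {p : ℝ} (hp : -1 < p) (a : ℝ) :
    IntervalIntegrable (fun v => (v + a) ^ p) volume 0 1 := by
  simpa using (intervalIntegral.intervalIntegrable_rpow' (a := a) (b := 1 + a) hp).comp_add_right a

lemma rpow_neg_mul_integral_rpow_le {p b : ℝ} (hp : -1 < p) (hp0 : p ≤ 0) (hb : 1 ≤ b) :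
    b ^ (-p) * ∫ x in (b - 1)..b, x ^ p ≤ (p + 1)⁻¹ := by
  have hp1 : 0 < p + 1 := by linarith
  have hb1 : (b - 1) ^ (-p) * (b - 1) ^ (p + 1) ≤ b ^ (-p) * (b - 1) ^ (p + 1) :=
    mul_le_mul_of_nonneg_right (Real.rpow_le_rpow (by linarith) (by linarith) (by linarith))
      (Real.rpow_nonneg (by linarith) _)
  rw [← Real.rpow_add' (by linarith) (by linarith), neg_add_cancel_left, Real.rpow_one] at hb1
  rw [integral_rpow (Or.inl hp), mul_div_assoc', mul_sub, ← Real.rpow_add' (by linarith)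
    (by linarith), neg_add_cancel_left, Real.rpow_one, div_le_iff₀ hp1, inv_mul_cancel₀ hp1.ne']
  linarith

lemma integral_rpow_le_inv_add_one {p b : ℝ} (hp : -1 < p) (hp0 : p ≤ 0) (hb : 1 ≤ b) :
    ∫ x in (b - 1)..b, x ^ p ≤ (p + 1)⁻¹ := by
  have h := rpow_neg_mul_integral_rpow_le hp hp0 hb
  have hI : 0 ≤ ∫ x in (b - 1)..b, x ^ p :=
    intervalIntegral.integral_nonneg (by linarith) fun x hx =>
      Real.rpow_nonneg (by linarith [hx.1]) _
  nlinarith [Real.one_le_rpow hb (by linarith : 0 ≤ -p)]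

lemma sum_Icc_sub_one_sub {M : Type*} [AddCommGroup M] {f : ℕ → M} {n : ℕ} (hn : 1 ≤ n) :
    ∑ i ∈ Icc 1 (n - 1), (f i - f (i + 1)) = f 1 - f n := by
  obtain ⟨m, rfl⟩ := Nat.exists_eq_add_of_le' hn
  rw [Nat.add_sub_cancel, ← Finset.Ico_add_one_right_eq_Icc]
  simpa [sub_eq_add_neg, add_comm] using Finset.sum_Ico_sub (fun i => - f i) hn

lemma intervalIntegral_mono_of_nonneg {f g : ℝ → ℝ} {a b : ℝ} (hab : a ≤ b)
    (hg : IntervalIntegrable g volume a b) (hf : ∀ x ∈ Set.Ioo a b, 0 ≤ f x)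
    (hfg : ∀ x ∈ Set.Ioo a b, f x ≤ g x) :
    ∫ x in a..b, f x ≤ ∫ x in a..b, g x := by
  simp only [intervalIntegral.integral_of_le hab, integral_Ioc_eq_integral_Ioo]
  exact integral_mono_of_nonneg (ae_restrict_of_forall_mem measurableSet_Ioo hf)
    (hg.1.mono_set Set.Ioo_subset_Ioc_self) (ae_restrict_of_forall_mem measurableSet_Ioo hfg)

lemma cH_pos {H : ℝ} (h1 : 1/2 < H) (h2 : H < 1) : 0 < cH H := by
  apply Real.sqrt_pos.2
  apply div_pos
  · exact mul_pos (by linarith) (Real.Gamma_pos_of_pos (by linarith))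
  · exact mul_pos (Real.Gamma_pos_of_pos (by linarith)) (Real.Gamma_pos_of_pos (by linarith))

lemma cH_nonneg (H : ℝ) : 0 ≤ cH H := Real.sqrt_nonneg _

noncomputable def jnKernel (H : ℝ) (n : ℕ) (x : ℝ) : ℝ :=
  ∫ v in (0:ℝ)..1, (v + n - 1) ^ (H - 1/2) * (v + n - 1 - x) ^ (H - 3/2)

lemma jn_eq_integral_jnKernel (H σ : ℝ) (n i : ℕ) :
    jn H σ n i = σ * cH H * (H - 1/2) *
      ∫ x in ((i : ℝ) - 1)..(i : ℝ), x ^ ((1:ℝ)/2 - H) * jnKernel H n x := rfl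

lemma measurable_jnKernel (H : ℝ) (n : ℕ) : Measurable (jnKernel H n) := by
  have h : StronglyMeasurable (Function.uncurry fun x v : ℝ =>
      (v + n - 1) ^ (H - 1/2) * (v + n - 1 - x) ^ (H - 3/2)) :=
    Measurable.stronglyMeasurable (by fun_prop)
  unfold jnKernel
  simp_rw [intervalIntegral.integral_of_le zero_le_one]
  exact (h.integral_prod_right (ν := volume.restrict (Set.Ioc 0 1))).measurable

section Kernels

variable {H : ℝ} {n : ℕ} {x c : ℝ}

lemma integral_add_sub_one_rpow (h1 : 1/2 < H) (b : ℝ) :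
    ∫ v in (0:ℝ)..1, (v + (b - 1)) ^ (H - 3/2) =
      (b ^ (H - 1/2) - (b - 1) ^ (H - 1/2)) / (H - 1/2) := by
  rw [integral_add_rpow (by linarith), add_sub_cancel, show H - 3/2 + 1 = H - 1/2 by ring]

lemma jnKernel_nonneg (hx0 : 0 ≤ x) (hx : x ≤ n - 1) : 0 ≤ jnKernel H n x :=
  intervalIntegral.integral_nonneg zero_le_one fun v hv =>
    mul_nonneg (Real.rpow_nonneg (by linarith [hv.1]) _) (Real.rpow_nonneg (by linarith [hv.1]) _)

lemma jnKernel_le (h1 : 1/2 < H) (h2 : H ≤ 3/2) (hx0 : 0 ≤ x) (hxc : x ≤ c)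
    (hc : c ≤ n - 1) :
    jnKernel H n x ≤
      n ^ (H - 1/2) * (((n - c) ^ (H - 1/2) - (n - c - 1) ^ (H - 1/2)) / (H - 1/2)) := by
  rw [← integral_add_sub_one_rpow h1, ← intervalIntegral.integral_const_mul]
  refine intervalIntegral_mono_of_nonneg zero_le_one
    ((intervalIntegrable_add_rpow (by linarith) _).const_mul _) (fun v hv => ?_) (fun v hv => ?_)
  · exact mul_nonneg (Real.rpow_nonneg (by linarith [hv.1]) _)
      (Real.rpow_nonneg (by linarith [hv.1]) _)
  · exact mul_le_mul (Real.rpow_le_rpow (by linarith [hv.1]) (by linarith [hv.2]) (by linarith))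
      (Real.rpow_le_rpow_of_nonpos (by linarith [hv.1]) (by linarith) (by linarith))
      (Real.rpow_nonneg (by linarith [hv.1]) _) (Real.rpow_nonneg (by positivity) _)

lemma le_jnKernel (h1 : 1/2 < H) (h2 : H ≤ 3/2) (hx0 : 0 ≤ x) (hcx : c ≤ x)
    (hx : x ≤ n - 1) :
    x ^ (H - 1/2) * (((n - c) ^ (H - 1/2) - (n - c - 1) ^ (H - 1/2)) / (H - 1/2)) ≤
      jnKernel H n x := by
  have hint : IntervalIntegrable (fun v => (v + n - 1) ^ (H - 1/2) * (v + n - 1 - x) ^ (H - 3/2))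
      volume 0 1 := by
    refine IntervalIntegrable.continuousOn_mul ?_
      (ContinuousOn.rpow_const (by fun_prop) fun v _ => Or.inr (by linarith))
    simpa only [add_sub_assoc] using intervalIntegrable_add_rpow (p := H - 3/2) (by linarith) _
  rw [← integral_add_sub_one_rpow h1, ← intervalIntegral.integral_const_mul]
  refine intervalIntegral.integral_mono_on_of_le_Ioo zero_le_one
    ((intervalIntegrable_add_rpow (by linarith) _).const_mul _) hint fun v hv => ?_
  exact mul_le_mul (Real.rpow_le_rpow hx0 (by linarith [hv.1]) (by linarith))
    (Real.rpow_le_rpow_of_nonpos (by linarith [hv.1]) (by linarith) (by linarith))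
    (Real.rpow_nonneg (by linarith [hv.1]) _) (Real.rpow_nonneg (by linarith [hv.1]) _)

end Kernels

section Coefficients

variable {H σ : ℝ} {n i : ℕ}

lemma intervalIntegrable_jn_integrand (h1 : 1/2 < H) (h2 : H < 3/2) (hi : 1 ≤ i) (hin : i < n) :
    IntervalIntegrable (fun x => x ^ ((1:ℝ)/2 - H) * jnKernel H n x) volume (i - 1) i := by
  have hi' : (1:ℝ) ≤ i := by exact_mod_cast hi
  have hin' : (i:ℝ) + 1 ≤ n := by exact_mod_cast hin
  refine IntervalIntegrable.mono_fun'
    ((intervalIntegral.intervalIntegrable_rpow' (r := (1:ℝ)/2 - H) (by linarith)).mul_const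
      (n ^ (H - 1/2) * (((n - i) ^ (H - 1/2) - (n - i - 1) ^ (H - 1/2)) / (H - 1/2))))
    ((measurable_id.pow_const _).mul (measurable_jnKernel H n)).aestronglyMeasurable ?_
  rw [Set.uIoc_of_le (by linarith)]
  refine ae_restrict_of_forall_mem measurableSet_Ioc fun x hx => ?_
  have hx0 : 0 ≤ x := by linarith [hx.1]
  dsimp only
  rw [Real.norm_of_nonneg (mul_nonneg (Real.rpow_nonneg hx0 _)
    (jnKernel_nonneg hx0 (by linarith [hx.2])))]
  exact mul_le_mul_of_nonneg_left (jnKernel_le h1 h2.le hx0 hx.2 (by linarith))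
    (Real.rpow_nonneg hx0 _)

lemma jn_le (h1 : 1/2 < H) (h2 : H < 3/2) (hσ : 0 ≤ σ) (hi : 1 ≤ i) (hin : i < n) :
    jn H σ n i ≤ σ * cH H * (3/2 - H)⁻¹ * n ^ (H - 1/2) *
      ((n - i) ^ (H - 1/2) - (n - i - 1) ^ (H - 1/2)) := by
  have hi' : (1:ℝ) ≤ i := by exact_mod_cast hi
  have hin' : (i:ℝ) + 1 ≤ n := by exact_mod_cast hin
  set K := (n:ℝ) ^ (H - 1/2) * (((n - i) ^ (H - 1/2) - (n - i - 1) ^ (H - 1/2)) / (H - 1/2))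
  have hK : 0 ≤ K := (jnKernel_nonneg (x := i) (by linarith) (by linarith)).trans
    (jnKernel_le h1 h2.le (by linarith) le_rfl (by linarith))
  have hc : 0 ≤ σ * cH H * (H - 1/2) :=
    mul_nonneg (mul_nonneg hσ (cH_nonneg H)) (by linarith)
  calc jn H σ n i
      ≤ σ * cH H * (H - 1/2) * ∫ x in ((i:ℝ) - 1)..i, x ^ ((1:ℝ)/2 - H) * K := by
        rw [jn_eq_integral_jnKernel]
        refine mul_le_mul_of_nonneg_left (intervalIntegral_mono_of_nonneg (by linarith)
          ((intervalIntegral.intervalIntegrable_rpow' (by linarith)).mul_const K)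
          (fun x hx => ?_) (fun x hx => ?_)) hc
        · exact mul_nonneg (Real.rpow_nonneg (by linarith [hx.1]) _)
            (jnKernel_nonneg (by linarith [hx.1]) (by linarith [hx.2]))
        · exact mul_le_mul_of_nonneg_left (jnKernel_le h1 h2.le (by linarith [hx.1]) hx.2.le
            (by linarith)) (Real.rpow_nonneg (by linarith [hx.1]) _)
    _ = σ * cH H * (H - 1/2) * (∫ x in ((i:ℝ) - 1)..i, x ^ ((1:ℝ)/2 - H)) * K := by
        rw [intervalIntegral.integral_mul_const]; ring
    _ ≤ σ * cH H * (H - 1/2) * (3/2 - H)⁻¹ * K := by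
        gcongr
        have h := integral_rpow_le_inv_add_one (p := 1/2 - H) (by linarith) (by linarith) hi'
        rwa [show (1:ℝ)/2 - H + 1 = 3/2 - H by ring] at h
    _ = _ := by
        have hq : H - 1/2 ≠ 0 := by linarith
        linear_combination (σ * cH H * (3/2 - H)⁻¹ * (n:ℝ) ^ (H - 1/2)) *
          mul_div_cancel₀ ((n - i : ℝ) ^ (H - 1/2) - (n - i - 1) ^ (H - 1/2)) hq

lemma le_jn (h1 : 1/2 < H) (h2 : H < 3/2) (hσ : 0 ≤ σ) (hi : 1 ≤ i) (hin : i < n) :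
    σ * cH H * ((n - i + 1) ^ (H - 1/2) - (n - i) ^ (H - 1/2)) ≤ jn H σ n i := by
  have hi' : (1:ℝ) ≤ i := by exact_mod_cast hi
  have hin' : (i:ℝ) + 1 ≤ n := by exact_mod_cast hin
  have hc : 0 ≤ σ * cH H * (H - 1/2) :=
    mul_nonneg (mul_nonneg hσ (cH_nonneg H)) (by linarith)
  set D := ((n:ℝ) - (i - 1)) ^ (H - 1/2) - (n - (i - 1) - 1) ^ (H - 1/2)
  calc σ * cH H * ((n - i + 1) ^ (H - 1/2) - (n - i) ^ (H - 1/2))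
      = σ * cH H * (H - 1/2) * ∫ _ in ((i:ℝ) - 1)..i, D / (H - 1/2) := by
        rw [intervalIntegral.integral_const, smul_eq_mul, sub_sub_cancel, one_mul]
        have hq : H - 1/2 ≠ 0 := by linarith
        simp only [D, show (n:ℝ) - (i - 1) = n - i + 1 by ring, add_sub_cancel_right]
        rw [mul_assoc (σ * cH H), mul_div_cancel₀ _ hq]
    _ ≤ jn H σ n i := by
        rw [jn_eq_integral_jnKernel]
        refine mul_le_mul_of_nonneg_left (intervalIntegral.integral_mono_on_of_le_Ioo
          (by linarith) intervalIntegrable_const (intervalIntegrable_jn_integrand h1 h2 hi hin)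
          fun x hx => ?_) hc
        have hx0 : 0 < x := by linarith [hx.1]
        calc D / (H - 1/2) = x ^ ((1:ℝ)/2 - H) * (x ^ (H - 1/2) * (D / (H - 1/2))) := by
              rw [← mul_assoc, ← Real.rpow_add hx0, show (1:ℝ)/2 - H + (H - 1/2) = 0 by ring,
                Real.rpow_zero, one_mul]
          _ ≤ x ^ ((1:ℝ)/2 - H) * jnKernel H n x :=
              mul_le_mul_of_nonneg_left (le_jnKernel h1 h2.le hx0.le hx.1.le (by linarith [hx.2]))
                (Real.rpow_nonneg hx0.le _)

end Coefficients

section Sums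

variable {H σ : ℝ} {n : ℕ}

lemma sum_jn_le (h1 : 1/2 < H) (h2 : H < 3/2) (hσ : 0 ≤ σ) (hn : 1 ≤ n) :
    ∑ i ∈ Icc 1 (n - 1), jn H σ n i ≤ σ * cH H * (3/2 - H)⁻¹ * n ^ (2 * H - 1) := by
  set C := σ * cH H * (3/2 - H)⁻¹ * (n:ℝ) ^ (H - 1/2)
  have hC : 0 ≤ C := mul_nonneg (mul_nonneg (mul_nonneg hσ (cH_nonneg H))
    (inv_nonneg.2 (by linarith))) (Real.rpow_nonneg (Nat.cast_nonneg n) _)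
  let f : ℕ → ℝ := fun j => ((n:ℝ) - j) ^ (H - 1/2)
  calc ∑ i ∈ Icc 1 (n - 1), jn H σ n i ≤ ∑ i ∈ Icc 1 (n - 1), C * (f i - f (i + 1)) := by
        refine sum_le_sum fun i hi => ?_
        obtain ⟨hi1, hi2⟩ := mem_Icc.1 hi
        refine (jn_le h1 h2 hσ hi1 (by omega)).trans_eq ?_
        simp only [C, f, Nat.cast_add, Nat.cast_one, sub_sub]
    _ = C * ((n - 1) ^ (H - 1/2) - 0 ^ (H - 1/2)) := by
        rw [← mul_sum, sum_Icc_sub_one_sub hn]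
        simp [f]
    _ ≤ C * n ^ (H - 1/2) := by
        have : (1:ℝ) ≤ n := by exact_mod_cast hn
        rw [Real.zero_rpow (by linarith), sub_zero]
        exact mul_le_mul_of_nonneg_left
          (Real.rpow_le_rpow (by linarith) (by linarith) (by linarith)) hC
    _ = σ * cH H * (3/2 - H)⁻¹ * n ^ (2 * H - 1) := by
        rw [mul_assoc, ← Real.rpow_add' (Nat.cast_nonneg n) (by linarith)]
        ring_nf

lemma le_sum_jn (h1 : 1/2 < H) (h2 : H < 3/2) (hσ : 0 ≤ σ) (hn : 1 ≤ n) :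
    σ * cH H * (n ^ (H - 1/2) - 1) ≤ ∑ i ∈ Icc 1 (n - 1), jn H σ n i := by
  let f : ℕ → ℝ := fun j => ((n:ℝ) - j + 1) ^ (H - 1/2)
  calc σ * cH H * (n ^ (H - 1/2) - 1)
      = ∑ i ∈ Icc 1 (n - 1), σ * cH H * (f i - f (i + 1)) := by
        rw [← mul_sum, sum_Icc_sub_one_sub hn]
        simp [f]
    _ ≤ ∑ i ∈ Icc 1 (n - 1), jn H σ n i := by
        refine sum_le_sum fun i hi => ?_
        obtain ⟨hi1, hi2⟩ := mem_Icc.1 hi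
        refine (le_jn h1 h2 hσ hi1 (by omega)).trans_eq' ?_
        simp only [f, Nat.cast_add, Nat.cast_one]
        ring_nf

end Sums

noncomputable def gnKernel (H : ℝ) (n : ℕ) (x : ℝ) : ℝ :=
  ∫ y in (0:ℝ)..1, (y * ((n : ℝ) - x) + x) ^ (H - 1/2) * y ^ (H - 3/2)

lemma gn_eq_integral_gnKernel (H σ : ℝ) (n : ℕ) :
    gn H σ n = σ * cH H * (H - 1/2) *
      ∫ x in ((n : ℝ) - 1)..(n : ℝ),
        x ^ ((1:ℝ)/2 - H) * ((n : ℝ) - x) ^ (H - 1/2) * gnKernel H n x := rfl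

section GnBounds

variable {H σ : ℝ} {n : ℕ} {x : ℝ}

lemma gnKernel_nonneg (hx0 : 0 ≤ x) (hxn : x ≤ n) : 0 ≤ gnKernel H n x :=
  intervalIntegral.integral_nonneg zero_le_one fun y hy => mul_nonneg
    (Real.rpow_nonneg (by nlinarith [hy.1]) _) (Real.rpow_nonneg hy.1 _)

lemma gnKernel_le (h1 : 1/2 < H) (hx0 : 0 ≤ x) (hxn : x ≤ n) :
    gnKernel H n x ≤ n ^ (H - 1/2) / (H - 1/2) := by
  have hI :
      ∫ y in (0:ℝ)..1, (n:ℝ) ^ (H - 1/2) * y ^ (H - 3/2) = n ^ (H - 1/2) / (H - 1/2) := by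
    rw [intervalIntegral.integral_const_mul, integral_rpow (Or.inl (by linarith)),
      show H - 3/2 + 1 = H - 1/2 by ring, Real.one_rpow, Real.zero_rpow (by linarith), sub_zero,
      mul_one_div]
  rw [← hI]
  refine intervalIntegral_mono_of_nonneg zero_le_one
    ((intervalIntegral.intervalIntegrable_rpow' (by linarith)).const_mul _)
    (fun y hy => ?_) (fun y hy => ?_)
  · exact mul_nonneg (Real.rpow_nonneg (by nlinarith [hy.1]) _) (Real.rpow_nonneg hy.1.le _)
  · exact mul_le_mul_of_nonneg_right (Real.rpow_le_rpow (by nlinarith [hy.1])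
      (by nlinarith [hy.1, hy.2]) (by linarith)) (Real.rpow_nonneg hy.1.le _)

lemma gn_nonneg (h1 : 1/2 ≤ H) (hσ : 0 ≤ σ) (hn : 1 ≤ n) : 0 ≤ gn H σ n := by
  have hn' : (1:ℝ) ≤ n := by exact_mod_cast hn
  refine mul_nonneg (mul_nonneg (mul_nonneg hσ (cH_nonneg H)) (by linarith))
    (intervalIntegral.integral_nonneg (by linarith) fun x hx => ?_)
  exact mul_nonneg (mul_nonneg (Real.rpow_nonneg (by linarith [hx.1]) _)
    (Real.rpow_nonneg (by linarith [hx.2]) _)) (gnKernel_nonneg (by linarith [hx.1]) hx.2)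

lemma gn_le (h1 : 1/2 < H) (h2 : H < 3/2) (hσ : 0 ≤ σ) (hn : 1 ≤ n) :
    gn H σ n ≤ σ * cH H * (3/2 - H)⁻¹ := by
  have hn' : (1:ℝ) ≤ n := by exact_mod_cast hn
  have hc : 0 ≤ σ * cH H * (H - 1/2) :=
    mul_nonneg (mul_nonneg hσ (cH_nonneg H)) (by linarith)
  calc gn H σ n ≤ σ * cH H * (H - 1/2) *
        ∫ x in ((n:ℝ) - 1)..n, x ^ ((1:ℝ)/2 - H) * (n ^ (H - 1/2) / (H - 1/2)) := by
        rw [gn_eq_integral_gnKernel]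
        refine mul_le_mul_of_nonneg_left (intervalIntegral_mono_of_nonneg (by linarith)
          ((intervalIntegral.intervalIntegrable_rpow' (by linarith)).mul_const _)
          (fun x hx => ?_) (fun x hx => ?_)) hc
        · exact mul_nonneg (mul_nonneg (Real.rpow_nonneg (by linarith [hx.1]) _)
            (Real.rpow_nonneg (by linarith [hx.2]) _))
            (gnKernel_nonneg (by linarith [hx.1]) hx.2.le)
        · rw [mul_assoc]
          refine mul_le_mul_of_nonneg_left ?_ (Real.rpow_nonneg (by linarith [hx.1]) _)
          calc ((n:ℝ) - x) ^ (H - 1/2) * gnKernel H n x ≤ 1 * (n ^ (H - 1/2) / (H - 1/2)) :=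
                mul_le_mul (Real.rpow_le_one (by linarith [hx.2]) (by linarith [hx.1])
                  (by linarith)) (gnKernel_le h1 (by linarith [hx.1]) hx.2.le)
                  (gnKernel_nonneg (by linarith [hx.1]) hx.2.le) zero_le_one
            _ = n ^ (H - 1/2) / (H - 1/2) := one_mul _
    _ = σ * cH H * ((n:ℝ) ^ (H - 1/2) * ∫ x in ((n:ℝ) - 1)..n, x ^ ((1:ℝ)/2 - H)) := by
        have hq : H - 1/2 ≠ 0 := by linarith
        rw [intervalIntegral.integral_mul_const]
        linear_combination (σ * cH H * ∫ x in ((n:ℝ) - 1)..n, x ^ ((1:ℝ)/2 - H)) *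
          mul_div_cancel₀ ((n:ℝ) ^ (H - 1/2)) hq
    _ ≤ σ * cH H * (3/2 - H)⁻¹ := by
        refine mul_le_mul_of_nonneg_left ?_ (mul_nonneg hσ (cH_nonneg H))
        have h := rpow_neg_mul_integral_rpow_le (p := 1/2 - H) (by linarith) (by linarith) hn'
        rwa [neg_sub, show (1:ℝ)/2 - H + 1 = 3/2 - H by ring] at h

end GnBounds

section Price

variable {H σ : ℝ} {N : ℕ} {s₀ : ℝ} {n : ℕ}

lemma Sp_succ (x : ℕ → ℝ) :
    Sp H σ N s₀ (n + 1) x = Sp H σ N s₀ n x * (1 +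
      ((∑ i ∈ Icc 1 n, jn H σ (n + 1) i * x i) + gn H σ (n + 1) * x (n + 1)) / (N:ℝ) ^ H) := by
  rw [Sp, Sp, prod_Icc_succ_top (by omega), Nat.add_sub_cancel, mul_assoc]

lemma Sp_congr {x y : ℕ → ℝ} (h : ∀ i ≤ n, x i = y i) :
    Sp H σ N s₀ n x = Sp H σ N s₀ n y := by
  refine congrArg (s₀ * ·) (prod_congr rfl fun k hk => ?_)
  have hk := (mem_Icc.1 hk).2
  rw [h k hk, sum_congr rfl fun i hi => by rw [h i (by have := (mem_Icc.1 hi).2; omega)]]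

lemma Sp_all_down :
    Sp H σ N s₀ n (fun _ => -1) = s₀ * ∏ k ∈ Icc 1 n,
      (1 - ((∑ i ∈ Icc 1 (k - 1), jn H σ k i) + gn H σ k) / (N:ℝ) ^ H) := by
  simp only [Sp, mul_neg_one, sum_neg_distrib]
  congr 1
  exact prod_congr rfl fun k _ => by ring

lemma Sp_all_down_pos (hs₀ : 0 < s₀) (hN : 0 < (N:ℝ) ^ H)
    (h : ∀ k ∈ Icc 1 n, ∑ i ∈ Icc 1 (k - 1), jn H σ k i + gn H σ k < (N:ℝ) ^ H) :
    0 < Sp H σ N s₀ n (fun _ => -1) := by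
  rw [Sp_all_down]
  refine mul_pos hs₀ (prod_pos fun k hk => ?_)
  rw [sub_pos, div_lt_one hN]
  exact h k hk

lemma Sp_all_down_then (hn : 1 ≤ n) (x : ℝ) :
    Sp H σ N s₀ n (fun i => if i = n then x else -1) = Sp H σ N s₀ (n - 1) (fun _ => -1) *
      (1 + (gn H σ n * x - ∑ i ∈ Icc 1 (n - 1), jn H σ n i) / (N:ℝ) ^ H) := by
  obtain ⟨m, rfl⟩ := Nat.exists_eq_add_of_le' hn
  rw [Sp_succ, Nat.add_sub_cancel, Sp_congr fun i hi => if_neg (by omega), if_pos rfl,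
    sum_congr rfl fun i hi => by rw [if_neg (by have := (mem_Icc.1 hi).2; omega)]]
  simp only [mul_neg_one, sum_neg_distrib]
  ring

lemma short_sale_profit_pos {lam x : ℝ} (hn : 1 ≤ n) (hN : 0 < (N:ℝ) ^ H)
    (hP : 0 < Sp H σ N s₀ (n - 1) (fun _ => -1))
    (h : lam * (N:ℝ) ^ H + gn H σ n * x < ∑ i ∈ Icc 1 (n - 1), jn H σ n i) :
    0 < (1 - lam) * Sp H σ N s₀ (n - 1) (fun _ => -1)
      - Sp H σ N s₀ n (fun i => if i = n then x else -1) := by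
  set r := (gn H σ n * x - ∑ i ∈ Icc 1 (n - 1), jn H σ n i) / (N:ℝ) ^ H
  have hr : r < -lam := by
    rw [div_lt_iff₀ hN]
    linarith
  rw [Sp_all_down_then hn, show ∀ P : ℝ, (1 - lam) * P - P * (1 + r) = P * (-r - lam) from
    fun P => by ring]
  exact mul_pos hP (by linarith)

end Price

section Asymptotics

variable {H σ : ℝ}

lemma eventually_sum_jn_add_gn_lt (h1 : 1/2 < H) (h2 : H < 1) (hσ : 0 ≤ σ) :
    ∀ᶠ N : ℕ in atTop, ∀ k ∈ Icc 1 N,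
      ∑ i ∈ Icc 1 (k - 1), jn H σ k i + gn H σ k < (N:ℝ) ^ H := by
  set C := σ * cH H * (3/2 - H)⁻¹
  have hC : 0 ≤ C := mul_nonneg (mul_nonneg hσ (cH_nonneg H)) (inv_nonneg.2 (by linarith))
  have hgrow : ∀ᶠ N : ℕ in atTop, 2 * C < (N:ℝ) ^ (1 - H) :=
    ((tendsto_rpow_atTop (by linarith)).comp tendsto_natCast_atTop_atTop).eventually_gt_atTop _
  filter_upwards [hgrow] with N hN k hk
  obtain ⟨hk1, hkN⟩ := mem_Icc.1 hk
  have hk1' : (1:ℝ) ≤ k := by exact_mod_cast hk1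
  have hkN' : (k:ℝ) ≤ N := by exact_mod_cast hkN
  have hpow : (k:ℝ) ^ (2 * H - 1) ≤ (N:ℝ) ^ (2 * H - 1) :=
    Real.rpow_le_rpow (by linarith) hkN' (by linarith)
  have hone : (1:ℝ) ≤ (N:ℝ) ^ (2 * H - 1) := Real.one_le_rpow (by linarith) (by linarith)
  calc ∑ i ∈ Icc 1 (k - 1), jn H σ k i + gn H σ k ≤ C * k ^ (2 * H - 1) + C :=
        add_le_add (sum_jn_le h1 (by linarith) hσ hk1) (gn_le h1 (by linarith) hσ hk1)
    _ ≤ 2 * C * (N:ℝ) ^ (2 * H - 1) := by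
        have := mul_le_mul_of_nonneg_left hpow hC
        have := mul_le_mul_of_nonneg_left hone hC
        linarith
    _ < (N:ℝ) ^ (1 - H) * (N:ℝ) ^ (2 * H - 1) := by gcongr
    _ = (N:ℝ) ^ H := by
        rw [← Real.rpow_add (by linarith)]
        ring_nf

lemma eventually_lam_mul_add_gn_lt_sum_jn (h1 : 1/2 < H) (h2 : H < 1) (hσ : 0 < σ)
    {lam : ℕ → ℝ} (hlim : Tendsto (fun N : ℕ => lam N * Real.sqrt N) atTop (nhds 0)) :
    ∀ᶠ N : ℕ in atTop,
      lam N * (N:ℝ) ^ H + gn H σ N < ∑ i ∈ Icc 1 (N - 1), jn H σ N i := by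
  set c := σ * cH H
  have hc : 0 < c := mul_pos hσ (cH_pos h1 h2)
  have hlam : ∀ᶠ N : ℕ in atTop, lam N * Real.sqrt N < c / 2 :=
    hlim.eventually_lt_const (by linarith)
  have hgrow : ∀ᶠ N : ℕ in atTop, c * ((3/2 - H)⁻¹ + 1) < c / 2 * (N:ℝ) ^ (H - 1/2) :=
    (((tendsto_rpow_atTop (by linarith)).comp tendsto_natCast_atTop_atTop).const_mul_atTop
      (by linarith)).eventually_gt_atTop _
  filter_upwards [hlam, hgrow, eventually_ge_atTop 1] with N hlamN hN hN1
  have hN0 : (0:ℝ) < N := by exact_mod_cast hN1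
  have hsplit : (N:ℝ) ^ H = Real.sqrt N * (N:ℝ) ^ (H - 1/2) := by
    rw [Real.sqrt_eq_rpow, ← Real.rpow_add hN0]
    ring_nf
  have hlamN' : lam N * (N:ℝ) ^ H ≤ c / 2 * (N:ℝ) ^ (H - 1/2) := by
    rw [hsplit, ← mul_assoc]
    exact mul_le_mul_of_nonneg_right hlamN.le (Real.rpow_nonneg hN0.le _)
  have := gn_le h1 (by linarith) hσ.le hN1
  have := le_sum_jn h1 (by linarith) hσ.le hN1
  linarith

end Asymptotics

theorem one_step_arbitrage_small_costs_general (H σ : ℝ) (hH : H ∈ Set.Ioo (1/2 : ℝ) 1)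
    (hσ : 0 < σ) (s₀ : ℝ) (hs₀ : 0 < s₀) (lam : ℕ → ℝ)
    (hlim : Filter.Tendsto (fun N : ℕ => lam N * Real.sqrt N) Filter.atTop (nhds 0)) :
    ∃ N₀ : ℕ, ∀ N : ℕ, N₀ ≤ N →
      (∀ k : ℕ, k ≤ N → 0 < Sp H σ N s₀ k (fun _ => -1)) ∧
      (∀ x : ℝ, x = -1 ∨ x = 1 →
        0 ≤ (1 - lam N) * Sp H σ N s₀ (N - 1) (fun _ => -1)
            - Sp H σ N s₀ N (fun i => if i = N then x else -1)) ∧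
      0 < (1 - lam N) * Sp H σ N s₀ (N - 1) (fun _ => -1)
          - Sp H σ N s₀ N (fun _ => -1) := by
  obtain ⟨h1, h2⟩ := hH
  obtain ⟨N₀, hN₀⟩ := eventually_atTop.1 ((eventually_sum_jn_add_gn_lt h1 h2 hσ.le).and
    ((eventually_lam_mul_add_gn_lt_sum_jn h1 h2 hσ hlim).and (eventually_ge_atTop 1)))
  refine ⟨N₀, fun N hN => ?_⟩
  obtain ⟨hdrift, hlam, hN1⟩ := hN₀ N hN
  have hNH : 0 < (N:ℝ) ^ H := Real.rpow_pos_of_pos (by exact_mod_cast hN1) H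
  have hpos : ∀ k ≤ N, 0 < Sp H σ N s₀ k (fun _ => -1) := fun k hk =>
    Sp_all_down_pos hs₀ hNH fun j hj => hdrift j (Icc_subset_Icc_right hk hj)
  have hprofit : ∀ x : ℝ, x = -1 ∨ x = 1 →
      0 < (1 - lam N) * Sp H σ N s₀ (N - 1) (fun _ => -1)
        - Sp H σ N s₀ N (fun i => if i = N then x else -1) := fun x hx =>
    short_sale_profit_pos hN1 hNH (hpos _ (Nat.sub_le N 1)) (by
      rcases hx with rfl | rfl <;> linarith [gn_nonneg (σ := σ) h1.le hσ.le hN1])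
  refine ⟨hpos, fun x hx => (hprofit x hx).le, ?_⟩
  simpa using hprofit (-1) (Or.inl rfl)

/-- Theorem 3.1 (`Sot`): if `λ_N = o(1/√N)`, then for all `N` big enough the 1-step
strategy which short-sells one unit of stock at time `N-1` on the all-down path and
liquidates at time `N` is a `λ_N`-arbitrage in the `N`-fractional binary market. -/
theorem one_step_arbitrage_small_costs (H σ : ℝ) (hH : H ∈ Set.Ioo (1/2 : ℝ) 1)
    (hσ : 0 < σ) (s₀ : ℝ) (hs₀ : 0 < s₀) (lam : ℕ → ℝ)
    (hlam : ∀ N, lam N ∈ Set.Icc (0:ℝ) 1)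
    (hlim : Filter.Tendsto (fun N : ℕ => lam N * Real.sqrt N) Filter.atTop (nhds 0)) :
    ∃ N₀ : ℕ, ∀ N : ℕ, N₀ ≤ N →
      (∀ k : ℕ, k ≤ N → 0 < Sp H σ N s₀ k (fun _ => -1)) ∧
      (∀ x : ℝ, x = -1 ∨ x = 1 →
        0 ≤ (1 - lam N) * Sp H σ N s₀ (N - 1) (fun _ => -1)
            - Sp H σ N s₀ N (fun i => if i = N then x else -1)) ∧
      0 < (1 - lam N) * Sp H σ N s₀ (N - 1) (fun _ => -1)
          - Sp H σ N s₀ N (fun _ => -1) :=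
  one_step_arbitrage_small_costs_general H σ hH hσ s₀ hs₀ lam hlim
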